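/- Uniqueness in Böttcher's Theorem: If f has a superattracting fixed point of local degree n ≥ 2 at 0 and φ₁, φ₂ are injective holomorphic maps on Δ_δ fixing 0 with φ_i^{-1} ∘ f ∘ φ_i (z) = z^n for i = 1, 2, then φ₂^{-1} = ω · φ₁^{-1} near 0 for some (n−1)-th root of unity ω. -/

import Mathlib

/-!
Set `ψ := φ₂⁻¹ ∘ φ₁`, an injective holomorphic germ fixing `0` with `ψ (z ^ n) = ψ z ^ n`.
Injectivity forces `c := ψ' 0 ≠ 0`: at a critical point a holomorphic map is locally an `m`-th
power with `m ≥ 2`, which is never injective. So `η z := ψ z / z` extends continuously to `0`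
with `η (z ^ n) = η z ^ n`, whence `c ^ n = c`. As `w ↦ w ^ n` has derivative `n ≥ 2` at its fixed
point `c`, it is expanding near `c`, so iterating the functional equation makes `‖η z - c‖` grow
geometrically unless it vanishes: `η ≡ c` near `0`, i.e. `ψ z = c * z`.
-/

open Metric Complex

open Filter Topology Set

section

variable {𝕜 : Type*} [NontriviallyNormedField 𝕜]

lemma HasDerivAt.eventually_mul_norm_sub_le {F : Type*} [NormedAddCommGroup F] [NormedSpace 𝕜 F]
    {f : 𝕜 → F} {f' : F} {a : 𝕜} {q : ℝ} (hf : HasDerivAt f f' a) (hq : q < ‖f'‖) :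
    ∀ᶠ x in 𝓝 a, q * ‖x - a‖ ≤ ‖f x - f a‖ := by
  filter_upwards [(hasDerivAt_iff_isLittleO.mp hf).def (sub_pos.mpr hq)] with x hx
  have := norm_le_norm_add_norm_sub' ((x - a) • f') (f x - f a)
  rw [norm_smul, norm_sub_rev ((x - a) • f')] at this
  nlinarith [norm_nonneg (x - a)]

lemma apply_eq_of_comp_pow_eq {X : Type*} [TopologicalSpace X] [T2Space X] {θ : 𝕜 → X}
    {p : X → X} {n : ℕ} (hn : n ≠ 0) (hθ : ContinuousAt θ 0) (hp : ContinuousAt p (θ 0))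
    (h : ∀ᶠ z in 𝓝[≠] 0, θ (z ^ n) = p (θ z)) : p (θ 0) = θ 0 := by
  have hpow : Tendsto (· ^ n) (𝓝[≠] (0 : 𝕜)) (𝓝 0) := by
    simpa [zero_pow hn] using ((continuous_pow n).tendsto (0 : 𝕜)).mono_left nhdsWithin_le_nhds
  exact tendsto_nhds_unique (hp.tendsto.comp (hθ.tendsto.mono_left nhdsWithin_le_nhds))
    ((hθ.tendsto.comp hpow).congr' h)

lemma pow_mem_ball_zero {z : 𝕜} {r : ℝ} {n : ℕ} (hz : z ∈ ball 0 r) (hr : r ≤ 1) (hn : n ≠ 0) :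
    z ^ n ∈ ball 0 r := by
  rw [mem_ball_zero_iff] at hz ⊢
  rw [norm_pow]
  exact (pow_le_of_le_one (norm_nonneg z) (hz.le.trans hr) hn).trans_lt hz

lemma eq_zero_of_forall_pow_mul_lt {q x : ℝ} (hq : 1 < q) (hx : 0 ≤ x)
    (h : ∀ k : ℕ, q ^ k * x < 1) : x = 0 := by
  by_contra hx0
  obtain ⟨k, hk⟩ := ((tendsto_pow_atTop_atTop_of_one_lt hq).atTop_mul_const
    (lt_of_le_of_ne hx (Ne.symm hx0))).eventually_ge_atTop 1 |>.exists
  exact (h k).not_ge hk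

lemma eventually_eq_of_comp_pow_eq {θ p : 𝕜 → 𝕜} {p' : 𝕜} {n : ℕ} (hn : n ≠ 0)
    (hθ : ContinuousAt θ 0) (hp : HasDerivAt p p' (θ 0)) (hp' : 1 < ‖p'‖)
    (hfix : p (θ 0) = θ 0) (h : ∀ᶠ z in 𝓝[≠] 0, θ (z ^ n) = p (θ z)) :
    ∀ᶠ z in 𝓝 0, θ z = θ 0 := by
  obtain ⟨q, hq1, hq⟩ := exists_between hp'
  have hexp := hp.eventually_mul_norm_sub_le hq
  rw [hfix] at hexp
  have hnear : ∀ᶠ z in 𝓝 (0 : 𝕜), (z ≠ 0 → θ (z ^ n) = p (θ z)) ∧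
      q * ‖θ z - θ 0‖ ≤ ‖p (θ z) - θ 0‖ ∧ ‖θ z - θ 0‖ < 1 := by
    refine (eventually_nhdsWithin_iff.mp h).and ((hθ.eventually hexp).and ?_)
    simp_rw [← dist_eq_norm]
    exact hθ.eventually (ball_mem_nhds _ one_pos)
  obtain ⟨r, hr, hball⟩ := Metric.eventually_nhds_iff_ball.mp hnear
  set r' := min r 1
  have hsub : ball (0 : 𝕜) r' ⊆ ball 0 r := ball_subset_ball (min_le_left _ _)
  -- each application of `z ↦ z ^ n` multiplies `‖θ z - θ 0‖` by at least `q`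
  have hgrowth : ∀ k : ℕ, ∀ z ∈ ball (0 : 𝕜) r', q ^ k * ‖θ z - θ 0‖ < 1 := by
    intro k
    induction k with
    | zero => intro z hz; simpa using (hball z (hsub hz)).2.2
    | succ k ih =>
      intro z hz
      have hstep : q * ‖θ z - θ 0‖ ≤ ‖θ (z ^ n) - θ 0‖ := by
        rcases eq_or_ne z 0 with rfl | hz0
        · simp
        · rw [(hball z (hsub hz)).1 hz0]
          exact (hball z (hsub hz)).2.1
      calc q ^ (k + 1) * ‖θ z - θ 0‖ = q ^ k * (q * ‖θ z - θ 0‖) := by ring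
        _ ≤ q ^ k * ‖θ (z ^ n) - θ 0‖ := by gcongr
        _ < 1 := ih _ (pow_mem_ball_zero hz (min_le_right _ _) hn)
  filter_upwards [ball_mem_nhds (0 : 𝕜) (lt_min hr one_pos)] with z hz
  exact sub_eq_zero.mp (norm_eq_zero.mp
    (eq_zero_of_forall_pow_mul_lt hq1 (norm_nonneg _) (hgrowth · z hz)))

end

lemma Complex.not_injOn_pow {t : Set ℂ} {m : ℕ} (hm : 2 ≤ m) (ht : t ∈ 𝓝 0) :
    ¬ InjOn (· ^ m) t := by
  intro hinj
  set ζ := exp (2 * Real.pi * I / m)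
  have hζ : IsPrimitiveRoot ζ m := isPrimitiveRoot_exp m (by omega)
  have hζt : ∀ᶠ w in 𝓝 (0 : ℂ), w ∈ t ∧ ζ * w ∈ t :=
    Filter.eventually_and.mpr ⟨ht, (continuous_const_mul ζ).tendsto' 0 0 (mul_zero ζ) ht⟩
  obtain ⟨w, ⟨hw, hζw⟩, hw0⟩ :=
    ((hζt.filter_mono nhdsWithin_le_nhds).and (self_mem_nhdsWithin (s := {0}ᶜ))).exists
  have hζ1 : ζ ≠ 1 := hζ.ne_one (by omega)
  refine hζ1 (mul_right_cancel₀ hw0 ?_)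
  rw [one_mul]
  exact (hinj hw hζw (by simp only [mul_pow, hζ.pow_eq_one, one_mul])).symm

lemma AnalyticAt.exists_pow_eq {η : ℂ → ℂ} {z₀ : ℂ} {m : ℕ} (hη : AnalyticAt ℂ η z₀)
    (hη₀ : η z₀ ≠ 0) (hm : m ≠ 0) : ∃ u : ℂ → ℂ, AnalyticAt ℂ u z₀ ∧ ∀ z, u z ^ m = η z := by
  refine ⟨fun z => η z₀ ^ (m⁻¹ : ℂ) * (η z / η z₀) ^ (m⁻¹ : ℂ), ?_, fun z => ?_⟩
  · refine analyticAt_const.mul ((hη.div_const).cpow analyticAt_const ?_)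
    simp [div_self hη₀]
  · rw [mul_pow, cpow_nat_inv_pow _ hm, cpow_nat_inv_pow _ hm, mul_div_cancel₀ _ hη₀]

lemma AnalyticAt.deriv_ne_zero_of_injOn {φ : ℂ → ℂ} {z₀ : ℂ} {s : Set ℂ}
    (hφ : AnalyticAt ℂ φ z₀) (hs : s ∈ 𝓝 z₀) (hinj : InjOn φ s) : deriv φ z₀ ≠ 0 := by
  intro hd
  have hfin : analyticOrderAt (fun z => φ z - φ z₀) z₀ ≠ ⊤ := by
    intro htop
    have hφs : ∀ᶠ z in 𝓝 z₀, z ∈ s ∧ φ z - φ z₀ = 0 := Filter.Eventually.and hs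
      (analyticOrderAt_eq_top.mp htop)
    obtain ⟨w, ⟨hw, hφw⟩, hwz₀⟩ :=
      ((hφs.filter_mono nhdsWithin_le_nhds).and (self_mem_nhdsWithin (s := {z₀}ᶜ))).exists
    exact hwz₀ (hinj hw (mem_of_mem_nhds hs) (sub_eq_zero.mp hφw))
  obtain ⟨m, hm⟩ := ENat.ne_top_iff_exists.mp hfin
  have hm2 : 2 ≤ m := by
    have h1 := hφ.analyticOrderAt_deriv_add_one
    have h2 : analyticOrderAt (deriv φ) z₀ ≠ 0 := hφ.deriv.analyticOrderAt_ne_zero.mpr hd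
    have : (2 : ℕ∞) ≤ m := by
      rw [hm, ← h1, ← one_add_one_eq_two]
      gcongr
      exact Order.one_le_iff_ne_zero.mpr h2
    exact_mod_cast this
  obtain ⟨η, hη, hη₀, hφη⟩ := (hφ.sub analyticAt_const).analyticOrderAt_eq_natCast.mp hm.symm
  obtain ⟨u, hu, hum⟩ := hη.exists_pow_eq (m := m) hη₀ (by omega)
  -- `φ - φ z₀ = v ^ m` near `z₀` for a local coordinate `v`, and `· ^ m` is not injective near `0`
  set v : ℂ → ℂ := fun z => (z - z₀) * u z
  have hu₀ : u z₀ ≠ 0 := fun h => hη₀ (by rw [← hum, h, zero_pow (by omega)])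
  have hv : HasStrictDerivAt v (u z₀) z₀ := by
    simpa using HasStrictDerivAt.fun_mul ((hasStrictDerivAt_id z₀).sub_const z₀) hu.hasStrictDerivAt
  have hvmap : map v (𝓝 z₀) = 𝓝 0 := by simpa [v] using hv.map_nhds_eq hu₀
  set s' := s ∩ {z | φ z - φ z₀ = v z ^ m}
  have hs' : s' ∈ 𝓝 z₀ := inter_mem hs (hφη.mono fun z hz => by
    simp only [Pi.sub_apply, smul_eq_mul] at hz
    simp only [v, mul_pow, hum, hz])
  have hinj' : InjOn ((· ^ m) ∘ v) s' := fun a ha b hb hab =>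
    hinj ha.1 hb.1 (sub_left_inj.mp (ha.2.trans (hab.trans hb.2.symm)))
  exact Complex.not_injOn_pow hm2 (hvmap ▸ image_mem_map hs') hinj'.image_of_comp

lemma AnalyticAt.exists_eventually_comp_eq {𝕜 : Type*} [NontriviallyNormedField 𝕜]
    [CompleteSpace 𝕜] [CharZero 𝕜] {φ₁ φ₂ : 𝕜 → 𝕜} {a b : 𝕜} (h₁ : AnalyticAt 𝕜 φ₁ b)
    (h₂ : AnalyticAt 𝕜 φ₂ a) (hd : deriv φ₂ a ≠ 0) (hab : φ₁ b = φ₂ a) :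
    ∃ ψ : 𝕜 → 𝕜, AnalyticAt 𝕜 ψ b ∧ ψ b = a ∧ ∀ᶠ z in 𝓝 b, φ₂ (ψ z) = φ₁ z := by
  set χ := h₂.hasStrictDerivAt.localInverse _ _ _ hd
  have ht : Tendsto φ₁ (𝓝 b) (𝓝 (φ₂ a)) := hab ▸ h₁.continuousAt.tendsto
  refine ⟨χ ∘ φ₁, (h₂.analyticAt_localInverse hd).comp_of_eq h₁ hab, ?_,
    ht.eventually (h₂.hasStrictDerivAt.eventually_right_inverse hd)⟩
  change χ (φ₁ b) = a
  rw [hab]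
  exact HasStrictFDerivAt.localInverse_apply_image _

lemma AnalyticAt.exists_eventually_eq_mul_of_comp_pow {ψ : ℂ → ℂ} {s : Set ℂ} {n : ℕ}
    (hn : 2 ≤ n) (hψ : AnalyticAt ℂ ψ 0) (hψ₀ : ψ 0 = 0) (hs : s ∈ 𝓝 0) (hinj : InjOn ψ s)
    (hpow : ∀ᶠ z in 𝓝 0, ψ (z ^ n) = ψ z ^ n) :
    ∃ ω : ℂ, ω ^ (n - 1) = 1 ∧ ∀ᶠ z in 𝓝 0, ψ z = ω * z := by
  set c := deriv ψ 0
  have hc : c ≠ 0 := hψ.deriv_ne_zero_of_injOn hs hinj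
  set η := dslope ψ 0
  have hψη : ∀ z, ψ z = z * η z := fun z => by simpa [hψ₀] using (sub_smul_dslope ψ 0 z).symm
  have hη : ContinuousAt η 0 := continuousAt_dslope_same.mpr hψ.differentiableAt
  have hη₀ : η 0 = c := dslope_same ψ 0
  have hηpow : ∀ᶠ z in 𝓝[≠] 0, η (z ^ n) = η z ^ n := by
    filter_upwards [nhdsWithin_le_nhds hpow, self_mem_nhdsWithin] with z hz hz0
    rw [hψη, hψη, mul_pow] at hz
    exact mul_left_cancel₀ (pow_ne_zero n hz0) hz
  have hcn : c ^ n = c :=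
    hη₀ ▸ apply_eq_of_comp_pow_eq (by omega) hη (continuous_pow n).continuousAt hηpow
  have hω : c ^ (n - 1) = 1 := by
    refine mul_right_cancel₀ hc ?_
    rw [← pow_succ, Nat.sub_add_cancel (by omega), hcn, one_mul]
  have hderiv : HasDerivAt (· ^ n) ((n : ℂ)) (η 0) := by
    simpa [hη₀, hω] using hasDerivAt_pow n (η 0)
  have hηc := eventually_eq_of_comp_pow_eq (by omega) hη hderiv
    (by rw [norm_natCast]; exact_mod_cast hn) (hη₀ ▸ hcn) hηpow
  refine ⟨c, hω, hηc.mono fun z hz => ?_⟩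
  rw [hψη, hz, hη₀, mul_comm]

theorem boettcher_uniqueness_general
    (f : ℂ → ℂ) (δ : ℝ) (hδ : 0 < δ)
    (n : ℕ) (hn : 2 ≤ n)
    (φ₁ φ₂ : ℂ → ℂ)
    (hφ₁ : DifferentiableOn ℂ φ₁ (ball (0:ℂ) δ))
    (hφ₂ : DifferentiableOn ℂ φ₂ (ball (0:ℂ) δ))
    (hinj₁ : Set.InjOn φ₁ (ball (0:ℂ) δ))
    (hinj₂ : Set.InjOn φ₂ (ball (0:ℂ) δ))
    (h₁0 : φ₁ 0 = 0) (h₂0 : φ₂ 0 = 0)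
    (hconj₁ : ∀ z ∈ ball (0:ℂ) δ, f (φ₁ z) = φ₁ (z ^ n))
    (hconj₂ : ∀ z ∈ ball (0:ℂ) δ, f (φ₂ z) = φ₂ (z ^ n)) :
    ∃ ω : ℂ, ω ^ (n - 1) = 1 ∧ ∃ ε : ℝ, 0 < ε ∧
      ∀ z ∈ ball (0:ℂ) ε, φ₁ z = φ₂ (ω * z) := by
  have hU : ball (0 : ℂ) δ ∈ 𝓝 0 := ball_mem_nhds 0 hδ
  have han₁ := hφ₁.analyticAt hU
  have han₂ := hφ₂.analyticAt hU
  obtain ⟨ψ, hψ, hψ₀, hφψ⟩ := han₁.exists_eventually_comp_eq han₂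
    (han₂.deriv_ne_zero_of_injOn hU hinj₂) (h₁0.trans h₂0.symm)
  have hψt : Tendsto ψ (𝓝 0) (𝓝 0) := by simpa [hψ₀] using hψ.continuousAt.tendsto
  have hpowt : Tendsto (· ^ n) (𝓝 (0 : ℂ)) (𝓝 0) :=
    (continuous_pow n).tendsto' 0 0 (zero_pow (by omega))
  have hinjψ : InjOn ψ {z | z ∈ ball 0 δ ∧ φ₂ (ψ z) = φ₁ z} := fun a ha b hb hab =>
    hinj₁ ha.1 hb.1 (by rw [← ha.2, ← hb.2, hab])
  have hpow : ∀ᶠ z in 𝓝 0, ψ (z ^ n) = ψ z ^ n := by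
    filter_upwards [hU, hφψ, hψt.eventually hU, hpowt.eventually hφψ,
      hpowt.eventually (hψt.eventually hU), hψt.eventually (hpowt.eventually hU)]
      with z hz hφz hψz hφzn hψzn hψnz
    refine hinj₂ hψzn hψnz ?_
    rw [hφzn, ← hconj₁ z hz, ← hφz, hconj₂ _ hψz]
  obtain ⟨ω, hω, hψω⟩ :=
    hψ.exists_eventually_eq_mul_of_comp_pow hn hψ₀ (inter_mem hU hφψ) hinjψ hpow
  refine ⟨ω, hω, Metric.eventually_nhds_iff_ball.mp ?_⟩
  filter_upwards [hφψ, hψω] with z hφz hψz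
  rw [← hφz, hψz]

theorem boettcher_uniqueness
    (f g : ℂ → ℂ) (δ₀ δ : ℝ) (hδ₀ : 0 < δ₀) (hδ : 0 < δ)
    (n : ℕ) (hn : 2 ≤ n)
    (hg : DifferentiableOn ℂ g (ball (0:ℂ) δ₀))
    (hg0 : g 0 ≠ 0)
    (hf : ∀ z ∈ ball (0:ℂ) δ₀, f z = z ^ n * g z)
    (φ₁ φ₂ : ℂ → ℂ)
    (hφ₁ : DifferentiableOn ℂ φ₁ (ball (0:ℂ) δ))
    (hφ₂ : DifferentiableOn ℂ φ₂ (ball (0:ℂ) δ))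
    (hinj₁ : Set.InjOn φ₁ (ball (0:ℂ) δ))
    (hinj₂ : Set.InjOn φ₂ (ball (0:ℂ) δ))
    (h₁0 : φ₁ 0 = 0) (h₂0 : φ₂ 0 = 0)
    (hconj₁ : ∀ z ∈ ball (0:ℂ) δ, f (φ₁ z) = φ₁ (z ^ n))
    (hconj₂ : ∀ z ∈ ball (0:ℂ) δ, f (φ₂ z) = φ₂ (z ^ n)) :
    ∃ ω : ℂ, ω ^ (n - 1) = 1 ∧ ∃ ε : ℝ, 0 < ε ∧
      ∀ z ∈ ball (0:ℂ) ε, φ₁ z = φ₂ (ω * z) :=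
  boettcher_uniqueness_general f δ hδ n hn φ₁ φ₂ hφ₁ hφ₂ hinj₁ hinj₂ h₁0 h₂0 hconj₁ hconj₂
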